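/- Let r₀ > 0, let Ω̃ ⊆ {(r,θ) ∈ ℝ² : r > r₀} be open and bounded, let λ ≥ 0 be a real number, and let P ∈ ∂Ω̃ satisfy the interior ball condition: there exists an open ball B ⊆ Ω̃ with P ∈ ∂B. Let u : ℝ² → ℝ be continuously differentiable on an open neighborhood of P and twice continuously differentiable on Ω̃, with (Lu)(r,θ) + λ·u(r,θ) = 0 for all (r,θ) ∈ Ω̃ and u(P) = 0. If P does not belong to the closure of {p ∈ Ω̃ : u(p) = 0}, then fderiv u P ≠ 0. -/

import Mathlib

/-- Partial derivative in the first coordinate direction. -/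
noncomputable def pd1 (f : ℝ × ℝ → ℝ) (p : ℝ × ℝ) : ℝ := fderiv ℝ f p (1, 0)

/-- Partial derivative in the second coordinate direction. -/
noncomputable def pd2 (f : ℝ × ℝ → ℝ) (p : ℝ × ℝ) : ℝ := fderiv ℝ f p (0, 1)

/-- The polar-form elliptic operator
`(Lu)(r,θ) = ∂²u/∂r² + (1/r²)·∂²u/∂θ² + (1/r)·∂u/∂r`. -/
noncomputable def Lpolar (u : ℝ × ℝ → ℝ) (p : ℝ × ℝ) : ℝ :=
  pd1 (pd1 u) p + (1 / p.1 ^ 2) * pd2 (pd2 u) p + (1 / p.1) * pd1 u p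

/-- `P` satisfies the interior ball condition for `Ω`: there is an open (Euclidean)
ball contained in `Ω` whose boundary contains `P`. -/
def InteriorBall (Ω : Set (ℝ × ℝ)) (P : ℝ × ℝ) : Prop :=
  ∃ (c : ℝ × ℝ) (ρ : ℝ), 0 < ρ ∧
    {x : ℝ × ℝ | (x.1 - c.1) ^ 2 + (x.2 - c.2) ^ 2 < ρ ^ 2} ⊆ Ω ∧
    (P.1 - c.1) ^ 2 + (P.2 - c.2) ^ 2 = ρ ^ 2

/-!
Hopf's boundary point argument. Shrink the interior ball to a ball `B(c, ρ)` tangent to `∂Ω̃` at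
`P` on which `u` has no zeros; `u` then has one sign on it, and after replacing `u` by `-u` we may
assume `u > 0`, so that `Lu = -λu ≤ 0` in `B`. On the annulus `ρ/2 ≤ |x - c| ≤ ρ` the barrier
`w = exp (-α|x - c|²) - exp (-αρ²)` satisfies `Lw > 0` for large `α`, because the coefficients
of `L` are bounded on `B ⊆ {r > r₀}`. With `ε` the minimum of `u` on the inner circle,
`u - εw ≥ 0` on both circles and `u - εw` has no interior minimum (`L(u - εw) < 0` there, while
`L ≥ 0` at a local minimum), so `u ≥ εw` on the annulus, with equality at `P`. Differentiating
towards `c` gives `Du(P)(c - P) ≥ ε Dw(P)(c - P) = 2εαρ² e^{-αρ²} > 0`.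
-/

open Filter Set Topology Metric

theorem IsLocalMin.deriv_deriv_nonneg {f : ℝ → ℝ} {a : ℝ} (h : IsLocalMin f a)
    (hf : ContinuousAt f a) : 0 ≤ deriv (deriv f) a := by
  by_contra! hneg
  have hconst : f =ᶠ[𝓝 a] fun _ => f a :=
    (h.and (isLocalMax_of_deriv_deriv_neg hneg h.deriv_eq_zero hf)).mono
      fun x hx => le_antisymm hx.2 hx.1
  have : deriv (deriv f) a = 0 := by
    rw [hconst.deriv.deriv_eq]; simp
  exact hneg.ne this

section FDeriv

variable {E : Type*} [NormedAddCommGroup E] [NormedSpace ℝ E]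

theorem ContDiffAt.differentiableAt_fderiv_apply {f : E → ℝ} {x : E} (hf : ContDiffAt ℝ 2 f x)
    (v : E) : DifferentiableAt ℝ (fun y => fderiv ℝ f y v) x :=
  ((hf.fderiv_right (m := 1) le_rfl).differentiableAt one_ne_zero).clm_apply
    (differentiableAt_const v)

theorem IsLocalMin.fderiv_fderiv_apply_nonneg {f : E → ℝ} {a : E} (h : IsLocalMin f a)
    (hf : ContDiffAt ℝ 2 f a) (v : E) : 0 ≤ fderiv ℝ (fun x => fderiv ℝ f x v) a v := by
  set γ : ℝ → E := fun t => a + t • v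
  have hγ : ∀ t, HasDerivAt γ v t := fun t => by
    simpa only [one_smul] using ((hasDerivAt_id' t).smul_const v).const_add a
  have hγ0 : γ 0 = a := by simp [γ]
  have hγa : Tendsto γ (𝓝 0) (𝓝 a) := hγ0 ▸ (hγ 0).continuousAt.tendsto
  have hderiv : deriv (f ∘ γ) =ᶠ[𝓝 0] fun t => fderiv ℝ f (γ t) v := by
    filter_upwards [hγa.eventually (hf.eventually (by simp))] with t ht
    exact ((ht.differentiableAt (by simp)).hasFDerivAt.comp_hasDerivAt t (hγ t)).deriv
  have hdd : HasDerivAt (fun t => fderiv ℝ f (γ t) v)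
      (fderiv ℝ (fun x => fderiv ℝ f x v) a v) 0 :=
    (hf.differentiableAt_fderiv_apply v).hasFDerivAt.comp_hasDerivAt_of_eq 0 (hγ 0) hγ0.symm
  have hmin : IsLocalMin (f ∘ γ) 0 := (hγ0 ▸ h).comp_continuous (hγ 0).continuousAt
  have := hmin.deriv_deriv_nonneg ((hγ0 ▸ hf.continuousAt).comp (hγ 0).continuousAt)
  rwa [hderiv.deriv_eq, hdd.deriv] at this

theorem fderiv_fderiv_sub_apply {f g : E → ℝ} {x : E} (hf : ContDiffAt ℝ 2 f x)
    (hg : ContDiffAt ℝ 2 g x) (v w : E) :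
    fderiv ℝ (fun y => fderiv ℝ (fun z => f z - g z) y v) x w
      = fderiv ℝ (fun y => fderiv ℝ f y v) x w - fderiv ℝ (fun y => fderiv ℝ g y v) x w := by
  have hev : (fun y => fderiv ℝ (fun z => f z - g z) y v)
      =ᶠ[𝓝 x] fun y => fderiv ℝ f y v - fderiv ℝ g y v := by
    filter_upwards [hf.eventually (by simp), hg.eventually (by simp)] with y hfy hgy
    rw [fderiv_fun_sub (hfy.differentiableAt (by simp)) (hgy.differentiableAt (by simp))]
    rfl
  rw [hev.fderiv_eq, fderiv_fun_sub (hf.differentiableAt_fderiv_apply v)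
    (hg.differentiableAt_fderiv_apply v)]
  rfl

theorem fderiv_fun_const_mul_field (a : ℝ) (f : E → ℝ) :
    fderiv ℝ (fun y => a * f y) = fun x => a • fderiv ℝ f x :=
  fderiv_const_smul_field (f := f) a

end FDeriv

theorem IsPreconnected.forall_pos_or_forall_neg {X : Type*} [TopologicalSpace X] {s : Set X}
    {f : X → ℝ} (hs : IsPreconnected s) (hf : ContinuousOn f s) (h0 : ∀ x ∈ s, f x ≠ 0) :
    (∀ x ∈ s, 0 < f x) ∨ ∀ x ∈ s, f x < 0 := by
  by_contra! h
  obtain ⟨⟨a, ha, hfa⟩, b, hb, hfb⟩ := h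
  obtain ⟨z, hz, hfz⟩ := hs.intermediate_value₂ ha hb hf continuousOn_const hfa hfb
  exact h0 z hz hfz

theorem IsCompact.exists_pos_le {X : Type*} [TopologicalSpace X] {s : Set X} {f : X → ℝ}
    (hs : IsCompact s) (hf : ContinuousOn f s) (hpos : ∀ x ∈ s, 0 < f x) :
    ∃ ε > 0, ∀ x ∈ s, ε ≤ f x := by
  rcases s.eq_empty_or_nonempty with rfl | hne
  · exact ⟨1, one_pos, by simp⟩
  · obtain ⟨xm, hxm, hmin⟩ := hs.exists_isMinOn hne hf
    exact ⟨f xm, hpos xm hxm, hmin⟩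

section NormedSpace

variable {F : Type*} [NormedAddCommGroup F] [NormedSpace ℝ F]

theorem dist_add_smul_sub_left (p q : F) (s : ℝ) : dist (p + s • (q - p)) p = |s| * dist p q := by
  simpa [AffineMap.lineMap_apply_module', add_comm] using dist_lineMap_left p q s

theorem dist_add_smul_sub_right (p q : F) (s : ℝ) :
    dist (p + s • (q - p)) q = |1 - s| * dist p q := by
  simpa [AffineMap.lineMap_apply_module', add_comm] using dist_lineMap_right p q s

theorem exists_ball_subset_ball_of_dist_eq {p c : F} {ρ δ : ℝ} (hρ : 0 < ρ) (hδ : 0 < δ)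
    (hp : dist p c = ρ) :
    ∃ c' ρ', 0 < ρ' ∧ dist p c' = ρ' ∧ ball c' ρ' ⊆ ball c ρ ∧ closedBall c' ρ' ⊆ ball p δ := by
  set t := min 1 (δ / (4 * ρ))
  have ht0 : 0 < t := lt_min one_pos (by positivity)
  have ht1 : t ≤ 1 := min_le_left _ _
  have htδ : t * ρ ≤ δ / 4 :=
    (mul_le_mul_of_nonneg_right (min_le_right _ _) hρ.le).trans_eq (by field_simp)
  refine ⟨p + t • (c - p), t * ρ, by positivity, ?_, ball_subset_ball' ?_,
    closedBall_subset_ball' ?_⟩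
  · rw [dist_comm, dist_add_smul_sub_left, hp, abs_of_pos ht0]
  · rw [dist_add_smul_sub_right, hp, abs_of_nonneg (by linarith)]; linarith
  · rw [dist_add_smul_sub_left, hp, abs_of_pos ht0]; linarith

end NormedSpace

section Euclid

/-- `ℝ × ℝ` carries the sup metric; the balls of `InteriorBall` are Euclidean, i.e. preimages of
balls of `WithLp 2 (ℝ × ℝ)` under `euclid`. -/
noncomputable abbrev euclid : (ℝ × ℝ) ≃L[ℝ] WithLp 2 (ℝ × ℝ) :=
  (WithLp.prodContinuousLinearEquiv 2 ℝ ℝ ℝ).symm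

theorem dist_euclid_sq (x y : ℝ × ℝ) :
    dist (euclid x) (euclid y) ^ 2 = (x.1 - y.1) ^ 2 + (x.2 - y.2) ^ 2 := by
  rw [WithLp.prod_dist_eq_of_L2, Real.sq_sqrt (by positivity)]
  simp [Real.dist_eq, sq_abs]

theorem dist_le_dist_euclid (x y : ℝ × ℝ) : dist x y ≤ dist (euclid x) (euclid y) := by
  have h := dist_euclid_sq x y
  rw [Prod.dist_eq, Real.dist_eq, Real.dist_eq]
  exact max_le (abs_le_of_sq_le_sq (by nlinarith) dist_nonneg)
    (abs_le_of_sq_le_sq (by nlinarith) dist_nonneg)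

theorem euclid_add_smul_sub (p q : ℝ × ℝ) (t : ℝ) :
    euclid (p + t • (q - p)) = euclid p + t • (euclid q - euclid p) := by
  simp

theorem isCompact_preimage_euclid {s : Set (WithLp 2 (ℝ × ℝ))} (hs : IsCompact s) :
    IsCompact (euclid ⁻¹' s) :=
  euclid.toHomeomorph.isCompact_preimage.mpr hs

theorem closure_preimage_euclid (s : Set (WithLp 2 (ℝ × ℝ))) :
    closure (euclid ⁻¹' s) = euclid ⁻¹' closure s :=
  (euclid.toHomeomorph.preimage_closure s).symm

theorem isPreconnected_preimage_euclid_ball (c : ℝ × ℝ) (ρ : ℝ) :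
    IsPreconnected (euclid ⁻¹' ball (euclid c) ρ) :=
  euclid.toHomeomorph.isPreconnected_preimage.mpr (convex_ball _ _).isPreconnected

end Euclid

section Lpolar

theorem Lpolar_sub {f g : ℝ × ℝ → ℝ} {x : ℝ × ℝ} (hf : ContDiffAt ℝ 2 f x)
    (hg : ContDiffAt ℝ 2 g x) : Lpolar (fun y => f y - g y) x = Lpolar f x - Lpolar g x := by
  unfold Lpolar pd1 pd2
  rw [fderiv_fderiv_sub_apply hf hg, fderiv_fderiv_sub_apply hf hg,
    fderiv_fun_sub (hf.differentiableAt (by simp)) (hg.differentiableAt (by simp))]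
  simp only [sub_apply]
  ring

theorem Lpolar_const_mul (a : ℝ) (f : ℝ × ℝ → ℝ) (x : ℝ × ℝ) :
    Lpolar (fun y => a * f y) x = a * Lpolar f x := by
  unfold Lpolar pd1 pd2
  simp only [fderiv_fun_const_mul_field, smul_apply, smul_eq_mul]
  ring

theorem Lpolar_neg (f : ℝ × ℝ → ℝ) (x : ℝ × ℝ) : Lpolar (fun y => -f y) x = -Lpolar f x := by
  simpa using Lpolar_const_mul (-1) f x

theorem Lpolar_nonneg_of_isLocalMin {f : ℝ × ℝ → ℝ} {x : ℝ × ℝ} (h : IsLocalMin f x)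
    (hf : ContDiffAt ℝ 2 f x) : 0 ≤ Lpolar f x := by
  have h1 : pd1 f x = 0 := by simp [pd1, h.fderiv_eq_zero]
  have h11 : 0 ≤ pd1 (pd1 f) x := h.fderiv_fderiv_apply_nonneg hf _
  have h22 : 0 ≤ pd2 (pd2 f) x := h.fderiv_fderiv_apply_nonneg hf _
  rw [Lpolar, h1, mul_zero, add_zero]
  positivity

end Lpolar

noncomputable def gaussian (c : ℝ × ℝ) (α : ℝ) (x : ℝ × ℝ) : ℝ :=
  Real.exp (-α * ((x.1 - c.1) ^ 2 + (x.2 - c.2) ^ 2))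

noncomputable def hopfBarrier (c : ℝ × ℝ) (ρ α : ℝ) (x : ℝ × ℝ) : ℝ :=
  gaussian c α x - Real.exp (-α * ρ ^ 2)

theorem four_mul_sq_mul_sub_pos {A A₀ B B₀ : ℝ} (hA₀ : 0 < A₀) (hB₀ : 0 < B₀) (hA : A₀ ≤ A)
    (hB : B ≤ B₀) : 0 < 4 * (B₀ / A₀) ^ 2 * A - 2 * (B₀ / A₀) * B := by
  have hα : 0 < B₀ / A₀ := div_pos hB₀ hA₀
  have hαA₀ : B₀ / A₀ * A₀ = B₀ := div_mul_cancel₀ _ hA₀.ne'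
  nlinarith [mul_le_mul_of_nonneg_left hA (by positivity : 0 ≤ 4 * (B₀ / A₀) ^ 2),
    mul_le_mul_of_nonneg_left hB (by positivity : 0 ≤ 2 * (B₀ / A₀)), mul_pos hα hB₀]

section hopfBarrier

variable (c : ℝ × ℝ) (ρ α : ℝ)

theorem contDiff_gaussian : ContDiff ℝ 2 (gaussian c α) := by
  unfold gaussian; fun_prop

theorem contDiff_hopfBarrier : ContDiff ℝ 2 (hopfBarrier c ρ α) :=
  (contDiff_gaussian c α).sub contDiff_const

theorem gaussian_eq (x : ℝ × ℝ) :
    gaussian c α x = Real.exp (-α * dist (euclid x) (euclid c) ^ 2) := by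
  rw [gaussian, dist_euclid_sq]

theorem hopfBarrier_lt_one {α : ℝ} (hα : 0 ≤ α) (x : ℝ × ℝ) : hopfBarrier c ρ α x < 1 := by
  rw [hopfBarrier, gaussian_eq]
  have : Real.exp (-α * dist (euclid x) (euclid c) ^ 2) ≤ 1 :=
    Real.exp_le_one_iff.mpr (by nlinarith [sq_nonneg (dist (euclid x) (euclid c))])
  linarith [Real.exp_pos (-α * ρ ^ 2)]

theorem hopfBarrier_eq_zero {x : ℝ × ℝ} (hx : dist (euclid x) (euclid c) = ρ) :
    hopfBarrier c ρ α x = 0 := by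
  rw [hopfBarrier, gaussian_eq, hx, sub_self]

theorem fderiv_gaussian_apply (x v : ℝ × ℝ) :
    fderiv ℝ (gaussian c α) x v
      = -2 * α * ((x.1 - c.1) * v.1 + (x.2 - c.2) * v.2) * gaussian c α x := by
  have h : HasFDerivAt (gaussian c α) _ x :=
    ((((hasFDerivAt_fst (p := x)).sub_const c.1).pow 2).add
      (((hasFDerivAt_snd (p := x)).sub_const c.2).pow 2)).const_mul (-α) |>.exp
  rw [h.fderiv]
  simp [gaussian]; ring

theorem fderiv_hopfBarrier : fderiv ℝ (hopfBarrier c ρ α) = fderiv ℝ (gaussian c α) := by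
  ext1 x; exact fderiv_sub_const _

theorem pd1_hopfBarrier :
    pd1 (hopfBarrier c ρ α) = fun x => -2 * α * (x.1 - c.1) * gaussian c α x := by
  ext x; simp [pd1, fderiv_hopfBarrier, fderiv_gaussian_apply]

theorem pd2_hopfBarrier :
    pd2 (hopfBarrier c ρ α) = fun x => -2 * α * (x.2 - c.2) * gaussian c α x := by
  ext x; simp [pd2, fderiv_hopfBarrier, fderiv_gaussian_apply]

theorem pd1_pd1_hopfBarrier (x : ℝ × ℝ) :
    pd1 (pd1 (hopfBarrier c ρ α)) x = (4 * α ^ 2 * (x.1 - c.1) ^ 2 - 2 * α) * gaussian c α x := by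
  have hl : HasFDerivAt (fun y : ℝ × ℝ => -2 * α * (y.1 - c.1))
      ((-2 * α) • ContinuousLinearMap.fst ℝ ℝ ℝ) x :=
    (hasFDerivAt_fst.sub_const c.1).const_mul (-2 * α)
  rw [pd1_hopfBarrier, pd1, fderiv_fun_mul hl.differentiableAt
    ((contDiff_gaussian c α).differentiable (by norm_num) x), hl.fderiv]
  simp [fderiv_gaussian_apply]; ring

theorem pd2_pd2_hopfBarrier (x : ℝ × ℝ) :
    pd2 (pd2 (hopfBarrier c ρ α)) x = (4 * α ^ 2 * (x.2 - c.2) ^ 2 - 2 * α) * gaussian c α x := by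
  have hl : HasFDerivAt (fun y : ℝ × ℝ => -2 * α * (y.2 - c.2))
      ((-2 * α) • ContinuousLinearMap.snd ℝ ℝ ℝ) x :=
    (hasFDerivAt_snd.sub_const c.2).const_mul (-2 * α)
  rw [pd2_hopfBarrier, pd2, fderiv_fun_mul hl.differentiableAt
    ((contDiff_gaussian c α).differentiable (by norm_num) x), hl.fderiv]
  simp [fderiv_gaussian_apply]; ring

theorem Lpolar_hopfBarrier (x : ℝ × ℝ) (hx : x.1 ≠ 0) :
    Lpolar (hopfBarrier c ρ α) x = (4 * α ^ 2 * ((x.1 - c.1) ^ 2 * x.1 ^ 2 + (x.2 - c.2) ^ 2)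
      - 2 * α * (x.1 ^ 2 + 1 + (x.1 - c.1) * x.1)) / x.1 ^ 2 * gaussian c α x := by
  rw [Lpolar, pd1_pd1_hopfBarrier, pd2_pd2_hopfBarrier, pd1_hopfBarrier]
  field_simp
  ring

theorem exists_Lpolar_hopfBarrier_pos {r₀ : ℝ} (hr₀ : 0 < r₀) (hc : r₀ < c.1) (hρ : 0 < ρ) :
    ∃ α > 0, ∀ x : ℝ × ℝ, r₀ < x.1 → ρ / 2 ≤ dist (euclid x) (euclid c) →
      dist (euclid x) (euclid c) ≤ ρ → 0 < Lpolar (hopfBarrier c ρ α) x := by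
  -- `A₀` bounds `(x₁ - c₁)² x₁² + (x₂ - c₂)²` from below and `B₀` bounds `x₁² + 1 + (x₁ - c₁) x₁`
  -- from above on the annulus; see `Lpolar_hopfBarrier`.
  set M := c.1 + ρ
  have hM : 0 < M := by linarith
  set μ := min (r₀ ^ 2) 1
  set A₀ := μ * ρ ^ 2 / 4
  set B₀ := M ^ 2 + 1 + ρ * M
  have hA₀ : 0 < A₀ := by positivity
  have hB₀ : 0 < B₀ := by positivity
  refine ⟨B₀ / A₀, by positivity, fun x hx hin hout => ?_⟩
  have hx0 : 0 < x.1 := hr₀.trans hx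
  have hin' : ρ ^ 2 / 4 ≤ (x.1 - c.1) ^ 2 + (x.2 - c.2) ^ 2 := by
    rw [← dist_euclid_sq]; nlinarith
  have hout' : (x.1 - c.1) ^ 2 + (x.2 - c.2) ^ 2 ≤ ρ ^ 2 := by
    rw [← dist_euclid_sq]; nlinarith [dist_nonneg (x := euclid x) (y := euclid c)]
  rw [Lpolar_hopfBarrier c ρ _ x hx0.ne']
  refine mul_pos (div_pos (four_mul_sq_mul_sub_pos hA₀ hB₀ ?_ ?_) (by positivity))
    (Real.exp_pos _)
  · have hμ : μ ≤ x.1 ^ 2 := (min_le_left _ _).trans (by nlinarith)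
    have hμ1 : μ ≤ 1 := min_le_right _ _
    show μ * ρ ^ 2 / 4 ≤ _
    nlinarith [mul_le_mul_of_nonneg_left hμ (sq_nonneg (x.1 - c.1)),
      mul_le_mul_of_nonneg_left hμ1 (sq_nonneg (x.2 - c.2)),
      mul_le_mul_of_nonneg_left hin' (show 0 ≤ μ by positivity)]
  · have hd1 : |x.1 - c.1| ≤ ρ := abs_le_of_sq_le_sq (by nlinarith) hρ.le
    have hxM : x.1 ≤ M := by linarith [le_abs_self (x.1 - c.1)]
    nlinarith [mul_le_mul hd1 hxM hx0.le hρ.le, le_abs_self (x.1 - c.1)]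

end hopfBarrier

theorem hopfBarrier_comparison {u : ℝ × ℝ → ℝ} {c : ℝ × ℝ} {ρ α ε : ℝ} (hρ : 0 < ρ)
    (hα : 0 ≤ α) (hε : 0 < ε)
    (hcont : ContinuousOn u (euclid ⁻¹' closedBall (euclid c) ρ))
    (hu : ∀ x ∈ euclid ⁻¹' ball (euclid c) ρ, ContDiffAt ℝ 2 u x)
    (hL : ∀ x ∈ euclid ⁻¹' ball (euclid c) ρ, Lpolar u x ≤ 0)
    (hpos : ∀ x ∈ euclid ⁻¹' ball (euclid c) ρ, 0 < u x)
    (hLw : ∀ x ∈ euclid ⁻¹' (ball (euclid c) ρ \ closedBall (euclid c) (ρ / 2)),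
      0 < Lpolar (hopfBarrier c ρ α) x)
    (hinner : ∀ x ∈ euclid ⁻¹' sphere (euclid c) (ρ / 2), ε ≤ u x) :
    ∀ x ∈ euclid ⁻¹' (closedBall (euclid c) ρ \ ball (euclid c) (ρ / 2)),
      ε * hopfBarrier c ρ α x ≤ u x := by
  set h := fun y => u y - ε * hopfBarrier c ρ α y
  have hw := contDiff_hopfBarrier c ρ α
  intro x hx
  obtain ⟨x₀, ⟨hx₀ρ, hx₀ρ2⟩, hmin⟩ := (isCompact_preimage_euclid
    ((isCompact_closedBall _ _).diff isOpen_ball)).exists_isMinOn ⟨x, hx⟩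
    ((hcont.mono (preimage_mono sdiff_subset)).sub
      (continuousOn_const.mul hw.continuous.continuousOn))
  suffices 0 ≤ h x₀ by linarith [show h x₀ ≤ h x from hmin hx]
  simp only [mem_closedBall, mem_ball, not_lt] at hx₀ρ hx₀ρ2
  rcases hx₀ρ.lt_or_eq with hlt | hbd
  · rcases hx₀ρ2.lt_or_eq with hgt | hbd
    · exfalso
      have hx₀ : x₀ ∈ euclid ⁻¹' (ball (euclid c) ρ \ closedBall (euclid c) (ρ / 2)) := by
        simpa using ⟨hlt, hgt⟩
      have hloc : IsLocalMin h x₀ := hmin.isLocalMin <| mem_of_superset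
        ((isOpen_ball.sdiff isClosed_closedBall).preimage euclid.continuous |>.mem_nhds hx₀)
        (preimage_mono (sdiff_subset_sdiff ball_subset_closedBall ball_subset_closedBall))
      have hw₀ : ContDiffAt ℝ 2 (fun y => ε * hopfBarrier c ρ α y) x₀ :=
        contDiffAt_const.mul hw.contDiffAt
      have := Lpolar_nonneg_of_isLocalMin hloc ((hu x₀ hlt).sub hw₀)
      rw [Lpolar_sub (hu x₀ hlt) hw₀, Lpolar_const_mul] at this
      nlinarith [hL x₀ hlt, mul_pos hε (hLw x₀ hx₀)]
    · have := hinner x₀ (mem_sphere.mpr hbd.symm)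
      have := mul_le_mul_of_nonneg_left (hopfBarrier_lt_one c ρ hα x₀).le hε.le
      simp only [h]; linarith
  · have hclos : x₀ ∈ closure (euclid ⁻¹' ball (euclid c) ρ) := by
      rw [closure_preimage_euclid, closure_ball _ hρ.ne']
      exact mem_closedBall.mpr hbd.le
    have := ContinuousWithinAt.closure_le hclos continuousWithinAt_const
      ((hcont x₀ (by simpa using hbd.le)).mono (preimage_mono ball_subset_closedBall))
      fun y hy => (hpos y hy).le
    simp only [h, hopfBarrier_eq_zero c ρ α hbd]; linarith

theorem hopf_lemma_ball {u : ℝ × ℝ → ℝ} {c P : ℝ × ℝ} {ρ r₀ : ℝ} (hr₀ : 0 < r₀) (hρ : 0 < ρ)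
    (hP : dist (euclid P) (euclid c) = ρ)
    (hr : ∀ x ∈ euclid ⁻¹' ball (euclid c) ρ, r₀ < x.1)
    (hcont : ContinuousOn u (euclid ⁻¹' closedBall (euclid c) ρ))
    (hdiff : DifferentiableAt ℝ u P)
    (hu : ∀ x ∈ euclid ⁻¹' ball (euclid c) ρ, ContDiffAt ℝ 2 u x)
    (hL : ∀ x ∈ euclid ⁻¹' ball (euclid c) ρ, Lpolar u x ≤ 0)
    (hpos : ∀ x ∈ euclid ⁻¹' ball (euclid c) ρ, 0 < u x) (huP : u P = 0) :
    0 < fderiv ℝ u P (c - P) := by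
  obtain ⟨α, hα, hLw⟩ := exists_Lpolar_hopfBarrier_pos c ρ hr₀ (hr c (by simpa using hρ)) hρ
  have hS : euclid ⁻¹' sphere (euclid c) (ρ / 2) ⊆ euclid ⁻¹' ball (euclid c) ρ :=
    preimage_mono (sphere_subset_ball (by linarith))
  obtain ⟨ε, hε, hinner⟩ := (isCompact_preimage_euclid (isCompact_sphere _ _)).exists_pos_le
    (hcont.mono (hS.trans (preimage_mono ball_subset_closedBall))) fun x hx => hpos x (hS hx)
  have hcomp := hopfBarrier_comparison hρ hα.le hε hcont hu hL hpos (fun x hx =>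
    hLw x (hr x hx.1) (by simpa using (not_le.mp hx.2).le) (by simpa using hx.1.le)) hinner
  have hmin : IsMinOn (fun x => u x - ε * hopfBarrier c ρ α x)
      (euclid ⁻¹' (closedBall (euclid c) ρ \ ball (euclid c) (ρ / 2))) P := fun x hx => by
    simp only [mem_ofPred_eq, huP, hopfBarrier_eq_zero c ρ α hP]
    linarith [hcomp x hx]
  have hseg : segment ℝ P (P + (1 / 2 : ℝ) • (c - P))
      ⊆ euclid ⁻¹' (closedBall (euclid c) ρ \ ball (euclid c) (ρ / 2)) := by
    rw [segment_eq_image']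
    rintro _ ⟨θ, ⟨hθ0, hθ1⟩, rfl⟩
    have : P + θ • (P + (1 / 2 : ℝ) • (c - P) - P) = P + (θ / 2) • (c - P) := by module
    simp only [this, mem_preimage, euclid_add_smul_sub, Set.mem_sdiff, mem_closedBall, mem_ball,
      dist_add_smul_sub_right, hP, abs_of_nonneg (by linarith : 0 ≤ 1 - θ / 2)]
    constructor <;> nlinarith
  have hw := (contDiff_hopfBarrier c ρ α).differentiable (by norm_num) P
  have hderiv := hmin.localize.hasFDerivWithinAt_nonneg
    (hdiff.hasFDerivAt.sub (hw.hasFDerivAt.const_mul ε)).hasFDerivWithinAt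
    (mem_posTangentConeAt_of_segment_subset hseg)
  have hPc : (P.1 - c.1) * (c - P).1 + (P.2 - c.2) * (c - P).2 = -ρ ^ 2 := by
    rw [Prod.fst_sub, Prod.snd_sub, ← hP, dist_euclid_sq]; ring
  simp only [sub_apply, smul_apply, map_smul, smul_eq_mul, fderiv_hopfBarrier,
    fderiv_gaussian_apply, hPc] at hderiv
  have hG : 0 < gaussian c α P := Real.exp_pos _
  nlinarith [mul_pos (mul_pos hε hα) (mul_pos (pow_pos hρ 2) hG)]

theorem hopf_lemma_ball_of_ne_zero {u : ℝ × ℝ → ℝ} {c P : ℝ × ℝ} {ρ r₀ lam : ℝ} (hr₀ : 0 < r₀)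
    (hρ : 0 < ρ) (hlam : 0 ≤ lam) (hP : dist (euclid P) (euclid c) = ρ)
    (hr : ∀ x ∈ euclid ⁻¹' ball (euclid c) ρ, r₀ < x.1)
    (hcont : ContinuousOn u (euclid ⁻¹' closedBall (euclid c) ρ))
    (hdiff : DifferentiableAt ℝ u P)
    (hu : ∀ x ∈ euclid ⁻¹' ball (euclid c) ρ, ContDiffAt ℝ 2 u x)
    (heq : ∀ x ∈ euclid ⁻¹' ball (euclid c) ρ, Lpolar u x + lam * u x = 0)
    (hne : ∀ x ∈ euclid ⁻¹' ball (euclid c) ρ, u x ≠ 0) (huP : u P = 0) :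
    fderiv ℝ u P (c - P) ≠ 0 := by
  rcases (isPreconnected_preimage_euclid_ball c ρ).forall_pos_or_forall_neg
    (hcont.mono (preimage_mono ball_subset_closedBall)) hne with hpos | hneg
  · refine (hopf_lemma_ball hr₀ hρ hP hr hcont hdiff hu (fun x hx => ?_) hpos huP).ne'
    nlinarith [heq x hx, hpos x hx]
  · have := hopf_lemma_ball (u := fun x => -u x) hr₀ hρ hP hr hcont.neg hdiff.neg
      (fun x hx => (hu x hx).neg) (fun x hx => ?_) (fun x hx => neg_pos.mpr (hneg x hx))
      (by simp [huP])
    · rw [fderiv_fun_neg, neg_apply, neg_pos] at this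
      exact this.ne
    · rw [Lpolar_neg]
      nlinarith [heq x hx, hneg x hx]

theorem hopf_nonzero_derivative_polar_general
    (r₀ : ℝ) (hr₀ : 0 < r₀)
    (Ω : Set (ℝ × ℝ)) (hΩsub : ∀ p ∈ Ω, r₀ < p.1)
    (lam : ℝ) (hlam : 0 ≤ lam)
    (P : ℝ × ℝ) (hball : InteriorBall Ω P)
    (u : ℝ × ℝ → ℝ)
    (V : Set (ℝ × ℝ)) (hV : IsOpen V) (hPV : P ∈ V) (hu1 : ContDiffOn ℝ 1 u V)
    (hu2 : ContDiffOn ℝ 2 u Ω)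
    (heq : ∀ p ∈ Ω, Lpolar u p + lam * u p = 0)
    (huP : u P = 0)
    (hnod : P ∉ closure {p ∈ Ω | u p = 0}) :
    fderiv ℝ u P ≠ 0 := by
  obtain ⟨c, ρ, hρ, hsub, hPc⟩ := hball
  replace hsub : euclid ⁻¹' ball (euclid c) ρ ⊆ Ω := fun x hx => hsub <| by
    rw [mem_ofPred_eq, ← dist_euclid_sq]; exact pow_lt_pow_left₀ hx dist_nonneg two_ne_zero
  replace hPc : dist (euclid P) (euclid c) = ρ := by
    rwa [← dist_euclid_sq, sq_eq_sq₀ dist_nonneg hρ.le] at hPc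
  obtain ⟨δ, hδ, hδsub⟩ :=
    Metric.isOpen_iff.mp (hV.inter isClosed_closure.isOpen_compl) P ⟨hPV, hnod⟩
  obtain ⟨c', ρ', hρ', hPc', hsmall, hnear⟩ := exists_ball_subset_ball_of_dist_eq hρ hδ hPc
  obtain ⟨c', rfl⟩ := euclid.surjective c'
  have hB : euclid ⁻¹' ball (euclid c') ρ' ⊆ Ω := (preimage_mono hsmall).trans hsub
  have hB' : euclid ⁻¹' closedBall (euclid c') ρ' ⊆ V ∩ (closure {p ∈ Ω | u p = 0})ᶜ :=
    fun x hx => hδsub ((dist_le_dist_euclid x P).trans_lt (hnear hx))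
  have hne := hopf_lemma_ball_of_ne_zero hr₀ hρ' hlam hPc' (fun x hx => hΩsub x (hB hx))
    (hu1.continuousOn.mono fun x hx => (hB' hx).1)
    ((hu1.contDiffAt (hV.mem_nhds hPV)).differentiableAt one_ne_zero)
    (fun x hx => (hu2.mono hB).contDiffAt ((isOpen_ball.preimage euclid.continuous).mem_nhds hx))
    (fun x hx => heq x (hB hx))
    (fun x hx hux => (hB' (preimage_mono ball_subset_closedBall hx)).2
      (subset_closure ⟨hB hx, hux⟩)) huP
  exact fun h => hne (by simp [h])

theorem hopf_nonzero_derivative_polar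
    (r₀ : ℝ) (hr₀ : 0 < r₀)
    (Ω : Set (ℝ × ℝ)) (hΩsub : ∀ p ∈ Ω, r₀ < p.1)
    (hΩ : IsOpen Ω) (hΩbd : Bornology.IsBounded Ω)
    (lam : ℝ) (hlam : 0 ≤ lam)
    (P : ℝ × ℝ) (hP : P ∈ frontier Ω) (hball : InteriorBall Ω P)
    (u : ℝ × ℝ → ℝ)
    (V : Set (ℝ × ℝ)) (hV : IsOpen V) (hPV : P ∈ V) (hu1 : ContDiffOn ℝ 1 u V)
    (hu2 : ContDiffOn ℝ 2 u Ω)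
    (heq : ∀ p ∈ Ω, Lpolar u p + lam * u p = 0)
    (huP : u P = 0)
    (hnod : P ∉ closure {p ∈ Ω | u p = 0}) :
    fderiv ℝ u P ≠ 0 :=
  hopf_nonzero_derivative_polar_general r₀ hr₀ Ω hΩsub lam hlam P hball u V hV hPV hu1 hu2 heq huP
    hnod
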